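/- ε-wise Cauchy formula for generalized holomorphic functions: let Ω ⊆ ℂ be open and simply connected, (f_ε) a family of holomorphic functions on Ω, γ_ε : [0,1] → Ω closed simple positively oriented C¹ curves with images in a fixed compact K ⊆ Ω, and z_{0,ε} points in the bounded component of ℂ ∖ γ_ε([0,1]) with dist(z_{0,ε}, γ_ε([0,1])) ≥ ε^r for some fixed r and all small ε. Then for all small ε, f_ε(z_{0,ε}) = (1/(2πi)) ∫_{γ_ε} f_ε(z)/(z − z_{0,ε}) dz. At the level of generalized numbers, (κf)(z₀) = (1/(2πi)) ∫_γ f(z)/(z−z₀) dz. -/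

import Mathlib

open Set Metric Complex

theorem DifferentiableOn.two_pi_I_inv_smul_circleIntegral_div_sub {R : ℝ} {c w : ℂ}
    {f : ℂ → ℂ} (hf : DifferentiableOn ℂ f (closedBall c R)) (hw : w ∈ ball c R) :
    (2 * Real.pi * I)⁻¹ • (∮ z in C(c, R), f z / (z - w)) = f w := by
  have hf' : DiffContOnCl ℂ f (ball c R) := (hf.mono closure_ball_subset_closedBall).diffContOnCl
  simpa only [smul_eq_mul, div_eq_inv_mul] using
    hf'.two_pi_i_inv_smul_circleIntegral_sub_inv_smul hw

theorem stmt15_general (Ω : Set ℂ)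
    (K : Set ℂ) (hKΩ : K ⊆ Ω)
    (f : ℝ → ℂ → ℂ) (hf : ∀ ε : ℝ, 0 < ε → ε ≤ 1 → DifferentiableOn ℂ (f ε) Ω)
    (c z₀ : ℝ → ℂ) (R : ℝ → ℝ)
    (η : ℝ) (hη : η ∈ Ioc (0:ℝ) 1)
    (hKball : ∀ ε : ℝ, 0 < ε → ε < η → closedBall (c ε) (R ε) ⊆ K)
    (hz₀in : ∀ ε : ℝ, 0 < ε → ε < η → z₀ ε ∈ ball (c ε) (R ε)) :
    ∃ η' > (0:ℝ), ∀ ε : ℝ, 0 < ε → ε < η' →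
      f ε (z₀ ε) = (2 * Real.pi * Complex.I)⁻¹ •
        ∮ z in C(c ε, R ε), f ε z / (z - z₀ ε) := by
  refine ⟨η, hη.1, fun ε hε hεη => ?_⟩
  have hdiff : DifferentiableOn ℂ (f ε) (closedBall (c ε) (R ε)) :=
    (hf ε hε (hεη.le.trans hη.2)).mono ((hKball ε hε hεη).trans hKΩ)
  exact (hdiff.two_pi_I_inv_smul_circleIntegral_div_sub (hz₀in ε hε hεη)).symm

/-- ε-wise G-Cauchy formula: for a family of holomorphic functions `f ε` on a
simply connected open `Ω ⊆ ℂ`, circle histories `γ ε = C(c ε, R ε)` contained (with their closed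
disks) in a compact `K ⊆ Ω`, and points `z₀ ε` inside the circles at distance at least `ε^r` from
them, the Cauchy formula `f ε (z₀ ε) = (1/2πi) ∮_{γ ε} f ε z/(z − z₀ ε) dz` holds for small `ε`;
this is the representative-wise form of `(κ f)(z₀) = (1/2πi) ∫_γ f(z)/(z−z₀) dz`. -/
theorem stmt15 (Ω : Set ℂ) (hΩ : IsOpen Ω) (hΩconn : SimplyConnectedSpace Ω)
    (K : Set ℂ) (hK : IsCompact K) (hKΩ : K ⊆ Ω)
    (f : ℝ → ℂ → ℂ) (hf : ∀ ε : ℝ, 0 < ε → ε ≤ 1 → DifferentiableOn ℂ (f ε) Ω)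
    (c z₀ : ℝ → ℂ) (R : ℝ → ℝ) (hR : ∀ ε : ℝ, 0 < ε → ε ≤ 1 → 0 < R ε)
    (η : ℝ) (hη : η ∈ Ioc (0:ℝ) 1)
    (hKball : ∀ ε : ℝ, 0 < ε → ε < η → closedBall (c ε) (R ε) ⊆ K)
    (hz₀in : ∀ ε : ℝ, 0 < ε → ε < η → z₀ ε ∈ ball (c ε) (R ε))
    (r : ℝ)
    (hdist : ∀ ε : ℝ, 0 < ε → ε < η → ε ^ r ≤ R ε - dist (z₀ ε) (c ε)) :
    ∃ η' > (0:ℝ), ∀ ε : ℝ, 0 < ε → ε < η' →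
      f ε (z₀ ε) = (2 * Real.pi * Complex.I)⁻¹ •
        ∮ z in C(c ε, R ε), f ε z / (z - z₀ ε) :=
  stmt15_general Ω K hKΩ f hf c z₀ R η hη hKball hz₀in
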